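/- For all n ≥ 4, the number of (n−2)-revstack sortable permutations of {1,…,n} is |T_n^{n-2}| = n! − ⌊(n−1)/2⌋! · ⌈(n−1)/2⌉!. -/

import Mathlib

private theorem length_takeWhile_ne_lt {w : List ℕ} {m : ℕ} (hm : m ∈ w) :
    (w.takeWhile (· ≠ m)).length < w.length := by
  induction w with
  | nil => cases hm
  | cons a as ih =>
    by_cases ha : a = m
    · subst ha
      simp [List.takeWhile_cons]
    · rw [List.takeWhile_cons_of_pos (by simpa using ha)]
      have hm' : m ∈ as := by
        rcases List.mem_cons.mp hm with h | h
        · exact absurd h.symm ha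
        · exact h
      simpa using Nat.succ_lt_succ (ih hm')

private theorem length_tail_dropWhile_lt {w : List ℕ} (hw : w ≠ []) (p : ℕ → Bool) :
    ((w.dropWhile p).tail).length < w.length := by
  cases hd : w.dropWhile p with
  | nil => simpa using List.length_pos_iff.mpr hw
  | cons x xs =>
    have h1 : (x :: xs).length ≤ w.length := by
      rw [← hd]; exact (List.dropWhile_sublist p).length_le
    simp only [List.tail_cons]
    exact lt_of_lt_of_le (by simp) h1

/-- The classical stack sort operator on words: `S(ε) = ε` and `S(L m R) = S(L) S(R) m`,
where `m` is the largest entry of the word `L m R`. -/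
def stackSort : List ℕ → List ℕ
  | [] => []
  | a :: as =>
    let m := ((a :: as).max?).getD 0
    stackSort ((a :: as).takeWhile (· ≠ m)) ++
      stackSort (((a :: as).dropWhile (· ≠ m)).tail) ++ [m]
termination_by w => w.length
decreasing_by
  · refine length_takeWhile_ne_lt ?_
    have : (a :: as).max? = some (((a :: as).max?).getD 0) := by
      cases h : (a :: as).max? with
      | none => simp [List.max?_eq_none_iff] at h
      | some b => simp
    exact List.max?_mem this
  · exact length_tail_dropWhile_lt (by simp) _

/-- The revstack sort operator `T = S ∘ rev`. -/
def revstackSort (w : List ℕ) : List ℕ := stackSort w.reverse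

/-- The word of the identity permutation of `{1,…,n}`, namely `1 2 ⋯ n`. -/
def idPerm (n : ℕ) : List ℕ := List.range' 1 n

/-- `w` is (the word of) a permutation of `{1,…,n}`. -/
def IsPermWord (n : ℕ) (w : List ℕ) : Prop := w.Perm (idPerm n)

/-- `x` precedes `y` in the word `w`, i.e. the position of `x` is smaller than that of `y`. -/
def Precedes (w : List ℕ) (x y : ℕ) : Prop := w.idxOf x < w.idxOf y

/-- `w` contains an occurrence of the pattern `132`: values `a < b < c` occurring in
the order `a, c, b`. -/
def Contains132 (w : List ℕ) : Prop :=
  ∃ a b c, a ∈ w ∧ b ∈ w ∧ c ∈ w ∧ a < b ∧ b < c ∧ Precedes w a c ∧ Precedes w c b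

/-- `w` contains an occurrence of the pattern `2431`: values `a < b < c < d` occurring in
the order `b, d, c, a`. -/
def Contains2431 (w : List ℕ) : Prop :=
  ∃ a b c d, a ∈ w ∧ b ∈ w ∧ c ∈ w ∧ d ∈ w ∧ a < b ∧ b < c ∧ c < d ∧
    Precedes w b d ∧ Precedes w d c ∧ Precedes w c a

/-- `w` contains an occurrence of the barred pattern `241 5̄ 3`: values `a < b < c < d`
occurring in the order `b, d, a, c` with no value `e > d` lying between `a` and `c` in `w`. -/
def ContainsBarred24153 (w : List ℕ) : Prop :=
  ∃ a b c d, a ∈ w ∧ b ∈ w ∧ c ∈ w ∧ d ∈ w ∧ a < b ∧ b < c ∧ c < d ∧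
    Precedes w b d ∧ Precedes w d a ∧ Precedes w a c ∧
    ¬ ∃ e, e ∈ w ∧ d < e ∧ Precedes w a e ∧ Precedes w e c

/-- The number of descents of a word. -/
def des (w : List ℕ) : ℕ := ((w.zip w.tail).filter (fun p => p.2 < p.1)).length

/-- The finset of all words of permutations of `{1,…,n}`. -/
def permsOf (n : ℕ) : Finset (List ℕ) := (idPerm n).permutations.toFinset

/-- The finset of `t`-revstack sortable permutations of `{1,…,n}`. -/
def revstackSortable (n t : ℕ) : Finset (List ℕ) :=
  (permsOf n).filter (fun w => revstackSort^[t] w = idPerm n)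

/-- The finset of `t`-stack sortable permutations of `{1,…,n}`. -/
def stackSortable (n t : ℕ) : Finset (List ℕ) :=
  (permsOf n).filter (fun w => stackSort^[t] w = idPerm n)

/-- The descent polynomial `W(A;x) = ∑_{π ∈ A} x^{1+des(π)}` of a set of permutations. -/
noncomputable def descPoly (A : Finset (List ℕ)) : Polynomial ℚ :=
  ∑ w ∈ A, Polynomial.X ^ (1 + des w)

/-- The `m`-th Eulerian polynomial `A_m(x) = ∑_{π ∈ S_m} x^{1+des(π)}`, with `A_0(x) = 1`. -/
noncomputable def eulerianPoly (m : ℕ) : Polynomial ℚ :=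
  if m = 0 then 1 else descPoly (permsOf m)

/-- `v_t(n,i)`: the number of `t`-revstack sortable permutations of `{1,…,n}`
with exactly `i` descents. -/
def vNum (t n i : ℕ) : ℕ := ((revstackSortable n t).filter (fun w => des w = i)).card

/-- `w_t(n,i)`: the number of `t`-stack sortable permutations of `{1,…,n}`
with exactly `i` descents. -/
def wNum (t n i : ℕ) : ℕ := ((stackSortable n t).filter (fun w => des w = i)).card

/-!
Write `T` for `revstackSort`. Since `T (L m R) = T(R) T(L) m` and `T` commutes with appending a
letter larger than all others, `T^[k+1] (L (k+3) R) = T^[k] (T(R) T(L)) (k+3)`: sortability of a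
permutation of `[k+3]` reduces to sortability of the permutation `T(R) T(L)` of `[k+2]`. By
induction, `T^[m-2]` sorts every permutation of `[m]` except the *parity peaks* `L m R`, in which
`L` holds the entries below `m` of the parity of `m` and `R` the others. If `m` lies in `L`,
then `T(R) T(L)` ends in `m`, so neither it nor `L (m+1) R` is a parity peak; if `m` lies in
`R = R₁ m R₂`, then `T(R) T(L) = T(R₂) T(R₁) m T(L)` is a parity peak for `m` exactly when
`L (m+1) R` is one for `m+1`. There are `⌊(m-1)/2⌋! ⌈(m-1)/2⌉!` parity peaks.
-/

open List

theorem List.exists_eq_append_cons_of_nodup {α : Type*} {a : α} {w : List α} (hw : w.Nodup)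
    (ha : a ∈ w) : ∃ L R, w = L ++ a :: R ∧ a ∉ L ∧ a ∉ R := by
  obtain ⟨L, R, rfl⟩ := append_of_mem ha
  have haLR : a ∉ L ++ R := (nodup_cons.mp (nodup_middle.mp hw)).1
  exact ⟨L, R, rfl, fun h => haLR (mem_append_left R h), fun h => haLR (mem_append_right L h)⟩

theorem stackSort_append_cons {m : ℕ} {L R : List ℕ} (hL : m ∉ L)
    (hmax : ∀ x ∈ L ++ m :: R, x ≤ m) :
    stackSort (L ++ m :: R) = stackSort L ++ stackSort R ++ [m] := by
  obtain ⟨a, as, hw⟩ := exists_cons_of_ne_nil (append_ne_nil_of_right_ne_nil L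
    (cons_ne_nil m R))
  have hmax' : (a :: as).max? = some m :=
    max?_eq_some_iff.mpr ⟨hw ▸ by simp, hw ▸ hmax⟩
  have hne : ∀ x ∈ L, decide (x ≠ m) = true := fun x hx => by
    simpa using ne_of_mem_of_not_mem hx hL
  rw [hw, stackSort, hmax', Option.getD_some, ← hw, takeWhile_append_of_pos hne,
    dropWhile_append_of_pos hne]
  simp

theorem stackSort_perm (w : List ℕ) : stackSort w ~ w := by
  induction hlen : w.length using Nat.strong_induction_on generalizing w with
  | _ k ih =>
    obtain rfl | ⟨m, hm⟩ : w = [] ∨ ∃ m, w.max? = some m := by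
      cases h : w.max? <;> simp_all [max?_eq_none_iff]
    · simp [stackSort]
    obtain ⟨L, R, hL, rfl, -⟩ := exists_erase_eq (max?_mem hm)
    rw [stackSort_append_cons hL (max?_eq_some_iff.mp hm).2]
    simp only [length_append, length_cons] at hlen
    calc stackSort L ++ stackSort R ++ [m] ~ L ++ R ++ [m] :=
          ((ih _ (by omega) L rfl).append (ih _ (by omega) R rfl)).append_right [m]
      _ ~ L ++ m :: R := by rw [append_assoc]; exact (perm_append_singleton m R).append_left L

theorem revstackSort_perm (w : List ℕ) : revstackSort w ~ w :=
  (stackSort_perm w.reverse).trans (reverse_perm w)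

@[simp]
theorem mem_revstackSort {x : ℕ} {w : List ℕ} : x ∈ revstackSort w ↔ x ∈ w :=
  (revstackSort_perm w).mem_iff

theorem revstackSort_append_cons {m : ℕ} {L R : List ℕ} (hR : m ∉ R)
    (hmax : ∀ x ∈ L ++ m :: R, x ≤ m) :
    revstackSort (L ++ m :: R) = revstackSort R ++ revstackSort L ++ [m] := by
  simp only [revstackSort, reverse_append, reverse_cons, append_assoc, singleton_append]
  rw [← append_assoc]
  exact stackSort_append_cons (by simpa using hR) fun x hx => hmax x (by simp at hx ⊢; tauto)

theorem revstackSort_append_singleton {a : ℕ} {u : List ℕ} (hu : ∀ x ∈ u, x < a) :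
    revstackSort (u ++ [a]) = revstackSort u ++ [a] := by
  simpa [revstackSort, stackSort] using
    revstackSort_append_cons (L := u) (R := []) not_mem_nil fun x hx => by
      simp only [mem_append, mem_singleton] at hx
      rcases hx with hx | rfl
      exacts [(hu x hx).le, le_rfl]

theorem iterate_revstackSort_append_singleton {a : ℕ} (t : ℕ) {u : List ℕ}
    (hu : ∀ x ∈ u, x < a) :
    revstackSort^[t] (u ++ [a]) = revstackSort^[t] u ++ [a] := by
  induction t generalizing u with
  | zero => rfl
  | succ t ih =>
    rw [Function.iterate_succ_apply, Function.iterate_succ_apply,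
      revstackSort_append_singleton hu, ih fun x hx => hu x (mem_revstackSort.mp hx)]

theorem mem_idPerm {x n : ℕ} : x ∈ idPerm n ↔ 1 ≤ x ∧ x ≤ n := by
  rw [idPerm, mem_range'_1]
  omega

theorem nodup_idPerm (n : ℕ) : (idPerm n).Nodup := nodup_range'

theorem idPerm_succ (n : ℕ) : idPerm (n + 1) = idPerm n ++ [n + 1] := by
  simp [idPerm, range'_concat, Nat.add_comm]

theorem append_cons_perm_idPerm_succ_iff {k : ℕ} {L R : List ℕ} :
    L ++ (k + 1) :: R ~ idPerm (k + 1) ↔ L ++ R ~ idPerm k := by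
  rw [idPerm_succ]
  exact ⟨fun h => (perm_middle.symm.trans (h.trans (perm_append_singleton _ _))).cons_inv,
    fun h => perm_middle.trans ((h.cons _).trans (perm_append_singleton _ _).symm)⟩

theorem exists_eq_append_cons_of_perm_idPerm_succ {k : ℕ} {w : List ℕ}
    (hw : w ~ idPerm (k + 1)) :
    ∃ L R, w = L ++ (k + 1) :: R ∧ k + 1 ∉ L ∧ k + 1 ∉ R ∧ L ++ R ~ idPerm k := by
  obtain ⟨L, R, rfl, hL, hR⟩ := exists_eq_append_cons_of_nodup
    (hw.nodup_iff.mpr (nodup_idPerm _)) (hw.mem_iff.mpr (mem_idPerm.mpr ⟨by omega, le_rfl⟩))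
  exact ⟨L, R, rfl, hL, hR, append_cons_perm_idPerm_succ_iff.mp hw⟩

theorem mem_permsOf {n : ℕ} {w : List ℕ} : w ∈ permsOf n ↔ w ~ idPerm n := by
  rw [permsOf, mem_toFinset, mem_permutations]

theorem card_permsOf (n : ℕ) : (permsOf n).card = n.factorial := by
  rw [permsOf, toFinset_card_of_nodup (nodup_permutations _ (nodup_idPerm n)),
    length_permutations, idPerm, length_range']

def IsParityPeak (m : ℕ) (w : List ℕ) : Prop :=
  ∃ L R, w = L ++ m :: R ∧ (∀ x ∈ L, x % 2 = m % 2) ∧ ∀ x ∈ R, x % 2 ≠ m % 2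

theorem isParityPeak_append_cons_iff {m : ℕ} {A B : List ℕ} (hA : m ∉ A) (hB : m ∉ B) :
    IsParityPeak m (A ++ m :: B) ↔
      (∀ x ∈ A, x % 2 = m % 2) ∧ ∀ x ∈ B, x % 2 ≠ m % 2 := by
  refine ⟨fun ⟨L, R, hw, hL, hR⟩ => ?_, fun h => ⟨A, B, rfl, h⟩⟩
  obtain ⟨rfl, -, rfl⟩ := (append_cons_inj_of_notMem hA hB).mp hw
  exact ⟨hL, hR⟩

theorem mod_two_eq_succ_mod_two_iff {x m : ℕ} : x % 2 = (m + 1) % 2 ↔ x % 2 ≠ m % 2 := by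
  omega

theorem isParityPeak_revstackSort_append_iff {m : ℕ} (hm : 2 ≤ m) {L R : List ℕ}
    (hLR : L ++ R ~ idPerm m) :
    IsParityPeak m (revstackSort R ++ revstackSort L) ↔
      (∀ x ∈ L, x % 2 = (m + 1) % 2) ∧ ∀ x ∈ R, x % 2 ≠ (m + 1) % 2 := by
  have hnodup : (L ++ R).Nodup := hLR.nodup_iff.mpr (nodup_idPerm m)
  have hmax : ∀ x ∈ L ++ R, x ≤ m := fun x hx => (mem_idPerm.mp (hLR.mem_iff.mp hx)).2
  have hmem : ∀ x, 1 ≤ x → x ≤ m → x ∈ L ++ R := fun x h₁ h₂ =>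
    hLR.mem_iff.mpr (mem_idPerm.mpr ⟨h₁, h₂⟩)
  rcases mem_append.mp (hmem m (by omega) le_rfl) with hmL | hmR
  · have hmR : m ∉ R := fun h => disjoint_of_nodup_append hnodup hmL h
    obtain ⟨L₁, L₂, rfl, hL₁, hL₂⟩ :=
      exists_eq_append_cons_of_nodup hnodup.of_append_left hmL
    refine iff_of_false ?_ fun h => by have := h.1 m (by simp); omega
    rw [revstackSort_append_cons hL₂ fun x hx => hmax x (mem_append_left R hx), ← append_assoc,
      ← append_assoc, isParityPeak_append_cons_iff (by simp [hmR, hL₁, hL₂]) not_mem_nil]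
    -- `T L` ends with `m`, but `m - 1`, of the other parity, has to occur before it
    rintro ⟨h, -⟩
    have hm1 := hmem (m - 1) (by omega) (by omega)
    have := h (m - 1) (by simp at hm1 ⊢; grind)
    omega
  · have hmL : m ∉ L := fun h => disjoint_of_nodup_append hnodup h hmR
    obtain ⟨R₁, R₂, rfl, hR₁, hR₂⟩ :=
      exists_eq_append_cons_of_nodup hnodup.of_append_right hmR
    rw [revstackSort_append_cons hR₂ fun x hx => hmax x (mem_append_right L hx), append_assoc,
      singleton_append,
      isParityPeak_append_cons_iff (by simp [hR₁, hR₂]) (by simpa using hmL)]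
    simp only [forall_mem_append, forall_mem_cons, mem_revstackSort, mod_two_eq_succ_mod_two_iff,
      ne_eq, not_not, true_and]
    tauto

theorem iterate_revstackSort_eq_idPerm_iff (k : ℕ) {w : List ℕ} (hw : w ~ idPerm (k + 2)) :
    revstackSort^[k] w = idPerm (k + 2) ↔ ¬ IsParityPeak (k + 2) w := by
  induction k generalizing w with
  | zero =>
    obtain ⟨L, R, rfl, hL, hR, hLR⟩ := exists_eq_append_cons_of_perm_idPerm_succ hw
    rw [isParityPeak_append_cons_iff hL hR]
    rcases append_eq_singleton_iff.mp (perm_singleton.mp hLR) with ⟨rfl, rfl⟩ | ⟨rfl, rfl⟩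
    all_goals decide
  | succ k ih =>
    obtain ⟨L, R, rfl, hL, hR, hLR⟩ := exists_eq_append_cons_of_perm_idPerm_succ hw
    have hσ : revstackSort R ++ revstackSort L ~ idPerm (k + 2) :=
      ((revstackSort_perm R).append (revstackSort_perm L)).trans (perm_append_comm.trans hLR)
    rw [Function.iterate_succ_apply, revstackSort_append_cons hR fun x hx =>
        (mem_idPerm.mp (hw.mem_iff.mp hx)).2,
      iterate_revstackSort_append_singleton k fun x hx =>
        Nat.lt_succ_of_le (mem_idPerm.mp (hσ.mem_iff.mp hx)).2,
      idPerm_succ, append_left_inj, ih hσ, isParityPeak_revstackSort_append_iff (by omega) hLR,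
      isParityPeak_append_cons_iff hL hR]

theorem card_image_append_cons_permutations {α : Type*} [DecidableEq α] {S O : List α}
    (hS : S.Nodup) (hO : O.Nodup) (a : α) :
    ((S.permutations.toFinset ×ˢ O.permutations.toFinset).image
        fun p => p.1 ++ a :: p.2).card = S.length.factorial * O.length.factorial := by
  rw [Finset.card_image_of_injOn, Finset.card_product,
    toFinset_card_of_nodup (nodup_permutations _ hS),
    toFinset_card_of_nodup (nodup_permutations _ hO), length_permutations, length_permutations]
  rintro ⟨L₁, R₁⟩ h₁ ⟨L₂, R₂⟩ h₂ h
  simp only [Finset.coe_product, Set.mem_prod, Finset.mem_coe, mem_toFinset, mem_permutations]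
    at h₁ h₂
  obtain ⟨rfl, h⟩ := append_inj h (h₁.1.length_eq.trans h₂.1.length_eq.symm)
  exact Prod.ext rfl (cons_injective h)

theorem length_filter_mod_two_idPerm (k c : ℕ) :
    ((idPerm k).filter (· % 2 = c % 2)).length = (k + c % 2) / 2 := by
  induction k with
  | zero => simp [idPerm]
  | succ k ih =>
    rw [idPerm_succ, filter_append, length_append, ih]
    by_cases h : (k + 1) % 2 = c % 2 <;> simp [h] <;> omega

def parityPeakPerms (k : ℕ) : Finset (List ℕ) :=
  ((((idPerm k).filter (· % 2 = (k + 1) % 2)).permutations.toFinset ×ˢ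
    ((idPerm k).filter (· % 2 ≠ (k + 1) % 2)).permutations.toFinset).image
      fun p => p.1 ++ (k + 1) :: p.2)

theorem card_parityPeakPerms (k : ℕ) :
    (parityPeakPerms k).card = (k / 2).factorial * ((k + 1) / 2).factorial := by
  have hO : (idPerm k).filter (· % 2 ≠ (k + 1) % 2) = (idPerm k).filter (· % 2 = k % 2) :=
    filter_congr fun x _ => by simp only [decide_eq_decide]; omega
  rw [parityPeakPerms, card_image_append_cons_permutations ((nodup_idPerm k).filter _)
    ((nodup_idPerm k).filter _), hO, length_filter_mod_two_idPerm, length_filter_mod_two_idPerm]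
  congr 2 <;> omega

theorem mem_parityPeakPerms {k : ℕ} {w : List ℕ} :
    w ∈ parityPeakPerms k ↔ w ~ idPerm (k + 1) ∧ IsParityPeak (k + 1) w := by
  simp only [parityPeakPerms, Finset.mem_image, Finset.mem_product, mem_toFinset,
    mem_permutations, Prod.exists]
  constructor
  · rintro ⟨L, R, ⟨hL, hR⟩, rfl⟩
    have hpart : (idPerm k).filter (· % 2 = (k + 1) % 2) ++
        (idPerm k).filter (· % 2 ≠ (k + 1) % 2) ~ idPerm k := by
      simpa only [decide_not] using filter_append_perm (· % 2 = (k + 1) % 2) (idPerm k)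
    refine ⟨append_cons_perm_idPerm_succ_iff.mpr ((hL.append hR).trans hpart),
      L, R, rfl, fun x hx => ?_, fun x hx => ?_⟩
    · simpa using (mem_filter.mp (hL.mem_iff.mp hx)).2
    · simpa using (mem_filter.mp (hR.mem_iff.mp hx)).2
  · rintro ⟨hw, L, R, rfl, hL, hR⟩
    have hLR := append_cons_perm_idPerm_succ_iff.mp hw
    refine ⟨L, R, ⟨?_, ?_⟩, rfl⟩
    · convert hLR.filter (· % 2 = (k + 1) % 2) using 1
      rw [filter_append, filter_eq_self.mpr (by simpa using hL),
        filter_eq_nil_iff.mpr (by simpa using hR), append_nil]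
    · convert hLR.filter (· % 2 ≠ (k + 1) % 2) using 1
      rw [filter_append, filter_eq_nil_iff.mpr (by simpa using hL),
        filter_eq_self.mpr (by simpa using hR), nil_append]

theorem card_revstack_n_sub_two
    (n : ℕ) (hn : 4 ≤ n) :
    (revstackSortable n (n - 2)).card =
      n.factorial - ((n - 1) / 2).factorial * ((n - 1 + 1) / 2).factorial := by
  obtain ⟨k, rfl⟩ : ∃ k, n = k + 2 := ⟨n - 2, by omega⟩
  have hunsortable : (permsOf (k + 2)).filter (fun w => ¬ revstackSort^[k] w = idPerm (k + 2)) =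
      parityPeakPerms (k + 1) := by
    ext w
    simp only [Finset.mem_filter, mem_permsOf, mem_parityPeakPerms]
    exact and_congr_right fun hw => by rw [iterate_revstackSort_eq_idPerm_iff k hw, not_not]
  have hcard := Finset.card_filter_add_card_filter_not (s := permsOf (k + 2))
    fun w => revstackSort^[k] w = idPerm (k + 2)
  rw [hunsortable, card_parityPeakPerms, card_permsOf] at hcard
  simp only [revstackSortable, Nat.add_sub_cancel]
  exact Nat.eq_sub_of_add_eq hcard
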